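/- arXiv:1710.05290 — 6 statements merged into one kernel-verified Lean document; each statement's English description precedes it below -/
import Mathlib

section
/- Let (K, α) be a Z₂-simplicial complex on a vertex type V and let G = (W, E) be a graph. If f : V → W is a graph homomorphism from Csorba's graph A(K, α) to G, then the map Φ(f) : V → W × W defined by Φ(f)(v) = (f(v), f(α(v))) is a Z₂-simplicial map from (K, α) to the box complex B(G); that is, for every simplex σ ∈ K the image Φ(f)(σ) is a simplex of B(G), and Φ(f)(α(v)) = swap(Φ(f)(v)) for every v ∈ V. -/
/-- A (finite abstract) simplicial complex on a vertex type `V`: a set of nonempty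
finite subsets of `V`, closed under nonempty subsets and containing all singletons. -/
def IsComplex {V : Type*} (K : Set (Finset V)) : Prop :=
  (∀ σ ∈ K, σ.Nonempty) ∧ (∀ σ ∈ K, ∀ τ : Finset V, τ ⊆ σ → τ.Nonempty → τ ∈ K) ∧
    (∀ v : V, ({v} : Finset V) ∈ K)

/-- A Z₂-simplicial complex: a simplicial complex together with a simplicial involution. -/
def IsZ2Complex {V : Type*} [DecidableEq V] (K : Set (Finset V)) (α : V → V) : Prop :=
  IsComplex K ∧ (∀ v, α (α v) = v) ∧ (∀ σ ∈ K, σ.image α ∈ K)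

/-- The box complex `B(G)` of a graph `G = (W, E)`: simplices are the nonempty finite
subsets `σ` of `W × W` such that `E a b'` and `E a' b` hold for all `(a,b), (a',b') ∈ σ`.
Its involution is `Prod.swap`. -/
def BoxCpx {W : Type*} (E : W → W → Prop) : Set (Finset (W × W)) :=
  {σ | σ.Nonempty ∧ ∀ p ∈ σ, ∀ q ∈ σ, E p.1 q.2 ∧ E q.1 p.2}

/-- A Z₂-simplicial map from `(K, α)` to `(L, β)`. -/
def IsZ2Map {V W : Type*} [DecidableEq W] (K : Set (Finset V)) (α : V → V)
    (L : Set (Finset W)) (β : W → W) (f : V → W) : Prop :=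
  (∀ σ ∈ K, σ.image f ∈ L) ∧ (∀ v, f (α v) = β (f v))

theorem IsComplex.pair_mem {V : Type*} [DecidableEq V] {K : Set (Finset V)} (hK : IsComplex K)
    {σ : Finset V} (hσ : σ ∈ K) {a b : V} (ha : a ∈ σ) (hb : b ∈ σ) : ({a, b} : Finset V) ∈ K :=
  hK.2.1 σ hσ _ (Finset.insert_subset ha (Finset.singleton_subset_iff.2 hb))
    (Finset.insert_nonempty _ _)

theorem IsZ2Complex.image_pair_mem {V : Type*} [DecidableEq V] {K : Set (Finset V)} {α : V → V}
    (hK : IsZ2Complex K α) {σ : Finset V} (hσ : σ ∈ K) {a b : V} (ha : a ∈ σ) (hb : b ∈ σ) :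
    ({α a, α b} : Finset V) ∈ K := by
  simpa only [Finset.image_insert, Finset.image_singleton] using
    hK.2.2 _ (hK.1.pair_mem hσ ha hb)

theorem image_mem_boxCpx {V W : Type*} [DecidableEq W] {E : W → W → Prop} {σ : Finset V}
    (g : V → W × W) (hσ : σ.Nonempty) (h : ∀ a ∈ σ, ∀ b ∈ σ, E (g a).1 (g b).2) :
    σ.image g ∈ BoxCpx E := by
  refine ⟨hσ.image g, ?_⟩
  simp only [Finset.forall_mem_image]
  exact fun a ha b hb => ⟨h a ha b hb, h b hb a ha⟩

theorem stmt0_general {V W : Type*} [DecidableEq V] [DecidableEq W]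
    (K : Set (Finset V)) (α : V → V) (hK : IsZ2Complex K α)
    (E : W → W → Prop)
    (f : V → W)
    (hf : ∀ v w : V, ({α v, w} : Finset V) ∈ K → E (f v) (f w)) :
    IsZ2Map K α (BoxCpx E) Prod.swap (fun v => (f v, f (α v))) := by
  refine ⟨fun σ hσ => image_mem_boxCpx _ (hK.1.1 σ hσ) fun a ha b hb => ?_, fun v => ?_⟩
  · exact hf a (α b) (hK.image_pair_mem hσ ha hb)
  · simp only [hK.2.1 v, Prod.swap_prod_mk]

/-- If `f` is a graph homomorphism from Csorba's graph `A(K, α)` to `G = (W, E)`,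
then `Φ(f) : v ↦ (f v, f (α v))` is a Z₂-simplicial map from `(K, α)` to `B(G)`. -/
theorem stmt0 {V W : Type*} [DecidableEq V] [DecidableEq W]
    (K : Set (Finset V)) (α : V → V) (hK : IsZ2Complex K α)
    (E : W → W → Prop) (hEsymm : ∀ a b : W, E a b → E b a)
    (f : V → W)
    (hf : ∀ v w : V, ({α v, w} : Finset V) ∈ K → E (f v) (f w)) :
    IsZ2Map K α (BoxCpx E) Prod.swap (fun v => (f v, f (α v))) :=
  stmt0_general K α hK E f hf
end

section
/- Let (K, α) be a Z₂-simplicial complex on a vertex type V and let G = (W, E) be a graph. If g : V → W × W is a Z₂-simplicial map from (K, α) to the box complex B(G), then the map Ψ(g) : V → W sending v to the first coordinate of g(v) is a graph homomorphism from Csorba's graph A(K, α) to G; that is, for all v, w ∈ V with {α(v), w} ∈ K, the vertices Ψ(g)(v) and Ψ(g)(w) are adjacent in G. -/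
lemma BoxCpx.adj_of_mem {W : Type*} {E : W → W → Prop} {σ : Finset (W × W)}
    (hσ : σ ∈ BoxCpx E) {p q : W × W} (hp : p ∈ σ) (hq : q ∈ σ) : E p.1 q.2 :=
  (hσ.2 p hp q hq).1

lemma IsZ2Map.boxCpx_adj_of_pair_mem {V W : Type*} [DecidableEq V] [DecidableEq W]
    {K : Set (Finset V)} {α : V → V} {E : W → W → Prop} {β : W × W → W × W}
    {g : V → W × W} (hg : IsZ2Map K α (BoxCpx E) β g) {u w : V}
    (huw : ({u, w} : Finset V) ∈ K) : E (g w).1 (g u).2 :=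
  BoxCpx.adj_of_mem (hg.1 _ huw) (Finset.mem_image_of_mem g (by simp))
    (Finset.mem_image_of_mem g (by simp))

theorem stmt1_general {V W : Type*} [DecidableEq V] [DecidableEq W]
    (K : Set (Finset V)) (α : V → V)
    (E : W → W → Prop) (hEsymm : ∀ a b : W, E a b → E b a)
    (g : V → W × W)
    (hg : IsZ2Map K α (BoxCpx E) Prod.swap g) :
    ∀ v w : V, ({α v, w} : Finset V) ∈ K → E (g v).1 (g w).1 := by
  intro v w hvw
  have hadj : E (g w).1 (g (α v)).2 := hg.boxCpx_adj_of_pair_mem hvw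
  rw [hg.2 v] at hadj
  exact hEsymm _ _ hadj

/-- If `g` is a Z₂-simplicial map from `(K, α)` to the box complex `B(G)` of `G = (W, E)`,
then `Ψ(g) : v ↦ (g v).1` is a graph homomorphism from Csorba's graph `A(K, α)` to `G`:
whenever `v` and `w` are adjacent in `A(K, α)` (i.e. `{α v, w} ∈ K`), the vertices
`(g v).1` and `(g w).1` are adjacent in `G`. -/
theorem stmt1 {V W : Type*} [DecidableEq V] [DecidableEq W]
    (K : Set (Finset V)) (α : V → V) (hK : IsZ2Complex K α)
    (E : W → W → Prop) (hEsymm : ∀ a b : W, E a b → E b a)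
    (g : V → W × W)
    (hg : IsZ2Map K α (BoxCpx E) Prod.swap g) :
    ∀ v w : V, ({α v, w} : Finset V) ∈ K → E (g v).1 (g w).1 :=
  stmt1_general K α E hEsymm g hg
end

section
/- Let G₁ and G₂ be groups with surjective group homomorphisms ε₁ : G₁ → ℤ/2ℤ and ε₂ : G₂ → ℤ/2ℤ, and let P be the subgroup {(x, y) ∈ G₁ × G₂ : ε₁(x) = ε₂(y)} of G₁ × G₂. Suppose f : P → ℤ is a group homomorphism such that for every (x, y) ∈ P, f(x, y) is even if and only if ε₁(x) = 0. Then there exists a group homomorphism g : G₁ → ℤ such that for every x ∈ G₁, g(x) is even if and only if ε₁(x) = 0, or there exists a group homomorphism g : G₂ → ℤ such that for every y ∈ G₂, g(y) is even if and only if ε₂(y) = 0. -/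
/-!
Pick `u ∈ G₁` and `v ∈ G₂` of parity one. Since `(u, v)² = (u², 1) · (1, v²)` in `P`, the even
numbers `f (u², 1)` and `f (1, v²)` add up to `2 f (u, v) ≡ 2 (mod 4)`, so one of them, say
`f (1, v²) = 4k`, is divisible by four. Then `x ↦ f (x, 1)` on even `x` and `x ↦ f (x, v) - 2k` on
odd `x` is a homomorphism `G₁ → ℤ` reducing to `ε₁` mod 2: the correction `2k` is exactly what
absorbs the factor `v²` in the product of two odd elements, and it keeps the parity of `f (x, v)`.
-/

def IsParityLift {G : Type*} [Mul G] (ε : G → ZMod 2) (g : G → ℤ) : Prop :=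
  (∀ a b : G, g (a * b) = g a + g b) ∧ ∀ x : G, Even (g x) ↔ ε x = 0

lemma ZMod.two_eq_zero_or_one (a : ZMod 2) : a = 0 ∨ a = 1 := by
  revert a; decide

section Parity

variable {G : Type*} [Group G] {ε : G → ZMod 2}

lemma parity_one (hε : ∀ a b : G, ε (a * b) = ε a + ε b) : ε 1 = 0 := by
  simpa using hε 1 1

lemma parity_mul_self (hε : ∀ a b : G, ε (a * b) = ε a + ε b) (x : G) : ε (x * x) = 0 := by
  rw [hε, CharTwo.add_self_eq_zero]

end Parity

section FiberProduct

variable {G₁ G₂ : Type*} [Group G₁] [Group G₂] {ε₁ : G₁ → ZMod 2} {ε₂ : G₂ → ZMod 2}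
  {f : G₁ × G₂ → ℤ}

lemma exists_isParityLift_of_four_dvd
    (hε₁ : ∀ a b : G₁, ε₁ (a * b) = ε₁ a + ε₁ b)
    (hε₂ : ∀ a b : G₂, ε₂ (a * b) = ε₂ a + ε₂ b)
    (hf : ∀ p q : G₁ × G₂, ε₁ p.1 = ε₂ p.2 → ε₁ q.1 = ε₂ q.2 → f (p * q) = f p + f q)
    (hpar : ∀ p : G₁ × G₂, ε₁ p.1 = ε₂ p.2 → (Even (f p) ↔ ε₁ p.1 = 0))
    {v : G₂} (hv : ε₂ v = 1) (hc : 4 ∣ f (1, v * v)) :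
    ∃ g : G₁ → ℤ, IsParityLift ε₁ g := by
  obtain ⟨k, hk⟩ := hc
  have hmul {x y : G₁} {s t : G₂} (hx : ε₁ x = ε₂ s) (hy : ε₁ y = ε₂ t) :
      f (x * y, s * t) = f (x, s) + f (y, t) :=
    hf (x, s) (y, t) hx hy
  have hsq (x : G₁) (hx : ε₁ x = 0) : f (x, v * v) = f (x, 1) + 4 * k := by
    simpa [hk] using hmul (x := x) (y := 1) (s := 1) (t := v * v)
      (by rw [hx, parity_one hε₂]) (by rw [parity_one hε₁, parity_mul_self hε₂])
  refine ⟨fun x => if ε₁ x = 0 then f (x, 1) else f (x, v) - 2 * k, fun a b => ?_, fun x => ?_⟩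
  · have hab : ε₁ (a * b) = ε₁ a + ε₁ b := hε₁ a b
    have e₂ := parity_one hε₂
    rcases ZMod.two_eq_zero_or_one (ε₁ a) with ha | ha <;>
      rcases ZMod.two_eq_zero_or_one (ε₁ b) with hb | hb <;>
      simp only [ha, hb, add_zero, zero_add, CharTwo.add_self_eq_zero] at hab <;>
      simp only [ha, hb, hab, one_ne_zero, if_true, if_false]
    · have h := hmul (s := 1) (t := 1) (by rw [ha, e₂]) (by rw [hb, e₂])
      rw [mul_one] at h
      linarith
    · have h := hmul (s := 1) (t := v) (by rw [ha, e₂]) (by rw [hb, hv])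
      rw [one_mul] at h
      linarith
    · have h := hmul (s := v) (t := 1) (by rw [ha, hv]) (by rw [hb, e₂])
      rw [mul_one] at h
      linarith
    · linarith [hmul (s := v) (t := v) (by rw [ha, hv]) (by rw [hb, hv]), hsq _ hab]
  · rcases ZMod.two_eq_zero_or_one (ε₁ x) with hx | hx
    · simpa [hx] using hpar (x, 1) (by rw [hx, parity_one hε₂])
    · have hodd : ¬Even (f (x, v)) := by simpa [hx] using hpar (x, v) (by rw [hx, hv])
      simp only [hx, one_ne_zero, if_false, iff_false]
      rw [Int.even_sub, iff_iff_eq]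
      simp [hodd]

lemma four_dvd_or_four_dvd
    (hε₁ : ∀ a b : G₁, ε₁ (a * b) = ε₁ a + ε₁ b)
    (hε₂ : ∀ a b : G₂, ε₂ (a * b) = ε₂ a + ε₂ b)
    (hf : ∀ p q : G₁ × G₂, ε₁ p.1 = ε₂ p.2 → ε₁ q.1 = ε₂ q.2 → f (p * q) = f p + f q)
    (hpar : ∀ p : G₁ × G₂, ε₁ p.1 = ε₂ p.2 → (Even (f p) ↔ ε₁ p.1 = 0))
    {u : G₁} {v : G₂} (hu : ε₁ u = 1) (hv : ε₂ v = 1) :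
    4 ∣ f (u * u, 1) ∨ 4 ∣ f (1, v * v) := by
  have huv : ε₁ u = ε₂ v := hu.trans hv.symm
  have hu₂ : ε₁ (u * u) = ε₂ 1 := by rw [parity_mul_self hε₁, parity_one hε₂]
  have hv₂ : ε₁ 1 = ε₂ (v * v) := by rw [parity_mul_self hε₂, parity_one hε₁]
  have hdouble : f (u * u, 1) + f (1, v * v) = 2 * f (u, v) := by
    have hsplit := hf (u * u, 1) (1, v * v) hu₂ hv₂
    have hsq := hf (u, v) (u, v) huv huv
    simp only [Prod.mk_mul_mk, mul_one, one_mul] at hsplit hsq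
    omega
  have hodd : ¬Even (f (u, v)) := by simpa [hu] using hpar (u, v) huv
  have hevenu : Even (f (u * u, 1)) := (hpar _ hu₂).2 (parity_mul_self hε₁ u)
  have hevenv : Even (f (1, v * v)) := (hpar _ hv₂).2 (parity_one hε₁)
  rw [Int.even_iff] at hodd hevenu hevenv
  omega

end FiberProduct

/-- Let `ε₁ : G₁ → ℤ/2` and `ε₂ : G₂ → ℤ/2` be surjective group homomorphisms and let
`P = {(x, y) : ε₁ x = ε₂ y} ≤ G₁ × G₂`. If `f` restricts to a group homomorphism
`P → ℤ` such that for `(x, y) ∈ P`, `f (x, y)` is even iff `ε₁ x = 0`, then `G₁` or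
`G₂` admits a group homomorphism to `ℤ` whose even part is exactly the kernel of the
corresponding parity homomorphism. -/
theorem stmt9 {G₁ G₂ : Type*} [Group G₁] [Group G₂]
    (ε₁ : G₁ → ZMod 2) (ε₂ : G₂ → ZMod 2)
    (hε₁ : ∀ a b : G₁, ε₁ (a * b) = ε₁ a + ε₁ b)
    (hε₂ : ∀ a b : G₂, ε₂ (a * b) = ε₂ a + ε₂ b)
    (hs₁ : Function.Surjective ε₁) (hs₂ : Function.Surjective ε₂)
    (f : G₁ × G₂ → ℤ)
    (hf : ∀ p q : G₁ × G₂, ε₁ p.1 = ε₂ p.2 → ε₁ q.1 = ε₂ q.2 → f (p * q) = f p + f q)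
    (hpar : ∀ p : G₁ × G₂, ε₁ p.1 = ε₂ p.2 → (Even (f p) ↔ ε₁ p.1 = 0)) :
    (∃ g : G₁ → ℤ, (∀ a b : G₁, g (a * b) = g a + g b) ∧
      ∀ x : G₁, Even (g x) ↔ ε₁ x = 0) ∨
    (∃ g : G₂ → ℤ, (∀ a b : G₂, g (a * b) = g a + g b) ∧
      ∀ y : G₂, Even (g y) ↔ ε₂ y = 0) := by
  obtain ⟨u, hu⟩ := hs₁ 1
  obtain ⟨v, hv⟩ := hs₂ 1
  rcases four_dvd_or_four_dvd hε₁ hε₂ hf hpar hu hv with hdvd | hdvd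
  · right
    exact exists_isParityLift_of_four_dvd hε₂ hε₁ (f := fun p => f p.swap)
      (fun p q hp hq => hf p.swap q.swap hp.symm hq.symm)
      (fun p hp => by rw [hpar p.swap hp.symm, hp, Prod.fst_swap]) hu hdvd
  · exact Or.inl (exists_isParityLift_of_four_dvd hε₁ hε₂ hf hpar hv hdvd)
end

section
/- Let G₁ and G₂ be groups with group homomorphisms ε₁ : G₁ → ℤ/2ℤ and ε₂ : G₂ → ℤ/2ℤ such that ε₂ is surjective, and let P be the subgroup {(x, y) ∈ G₁ × G₂ : ε₁(x) = ε₂(y)} of G₁ × G₂. Then for all x₁, x₂ ∈ G₁, the element ([x₁, x₂], 1) of G₁ × G₂ (where [x₁, x₂] denotes the commutator and 1 is the identity of G₂) belongs to the commutator subgroup of P. -/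
/-!
Pick `g : G₂` with `ε₂ g = 1` and lift each `x : G₁` to `(x, g ^ ε₁ x) ∈ P`. Powers of `g` commute,
so the commutator of the lifts of `x₁` and `x₂` is `(⁅x₁, x₂⁆, 1)`.
-/

open scoped commutatorElement

theorem Subgroup.mk_commutatorElement_one_mem_commutator {G₁ G₂ : Type*} [Group G₁] [Group G₂]
    {P : Subgroup (G₁ × G₂)} {x₁ x₂ : G₁} {y₁ y₂ : G₂} (h₁ : (x₁, y₁) ∈ P) (h₂ : (x₂, y₂) ∈ P)
    (hy : Commute y₁ y₂) : ((⁅x₁, x₂⁆, (1 : G₂)) : G₁ × G₂) ∈ ⁅P, P⁆ := by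
  have hcomm : ((⁅x₁, x₂⁆, (1 : G₂)) : G₁ × G₂) = ⁅(x₁, y₁), (x₂, y₂)⁆ :=
    Prod.ext rfl (commutatorElement_eq_one_iff_mul_comm.mpr hy.eq).symm
  rw [hcomm]
  exact Subgroup.commutator_mem_commutator h₁ h₂

theorem exists_forall_apply_pow_val_eq {G : Type*} [Group G] {ε : G → ZMod 2}
    (hε : ∀ a b : G, ε (a * b) = ε a + ε b) (hs : Function.Surjective ε) :
    ∃ g : G, ∀ c : ZMod 2, ε (g ^ c.val) = c := by
  obtain ⟨g, hg⟩ := hs 1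
  have hε_one : ε 1 = 0 := by simpa using hε 1 1
  refine ⟨g, fun c => ?_⟩
  obtain rfl | rfl : c = 0 ∨ c = 1 := by decide +revert
  · rwa [ZMod.val_zero, pow_zero]
  · rwa [ZMod.val_one, pow_one]

theorem stmt10_general {G₁ G₂ : Type*} [Group G₁] [Group G₂]
    (ε₁ : G₁ → ZMod 2) (ε₂ : G₂ → ZMod 2)
    (hε₂ : ∀ a b : G₂, ε₂ (a * b) = ε₂ a + ε₂ b)
    (hs₂ : Function.Surjective ε₂)
    (P : Subgroup (G₁ × G₂))
    (hP : ∀ p : G₁ × G₂, p ∈ P ↔ ε₁ p.1 = ε₂ p.2) :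
    ∀ x₁ x₂ : G₁,
      ((⁅x₁, x₂⁆, (1 : G₂)) : G₁ × G₂) ∈ (commutator ↥P).map P.subtype := by
  intro x₁ x₂
  obtain ⟨g, hg⟩ := exists_forall_apply_pow_val_eq hε₂ hs₂
  have hmem : ∀ x : G₁, (x, g ^ (ε₁ x).val) ∈ P := fun x => (hP _).mpr (hg _).symm
  rw [Subgroup.map_subtype_commutator]
  exact Subgroup.mk_commutatorElement_one_mem_commutator (hmem x₁) (hmem x₂)
    (Commute.pow_pow_self g _ _)

/-- Let `ε₁ : G₁ → ℤ/2` and `ε₂ : G₂ → ℤ/2` be group homomorphisms with `ε₂`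
surjective, and let `P = {(x, y) : ε₁ x = ε₂ y} ≤ G₁ × G₂`. Then for all
`x₁, x₂ : G₁`, the element `(⁅x₁, x₂⁆, 1)` of `G₁ × G₂` belongs to the commutator
subgroup of `P` (viewed inside `G₁ × G₂` via the inclusion `P.subtype`). -/
theorem stmt10 {G₁ G₂ : Type*} [Group G₁] [Group G₂]
    (ε₁ : G₁ → ZMod 2) (ε₂ : G₂ → ZMod 2)
    (hε₁ : ∀ a b : G₁, ε₁ (a * b) = ε₁ a + ε₁ b)
    (hε₂ : ∀ a b : G₂, ε₂ (a * b) = ε₂ a + ε₂ b)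
    (hs₂ : Function.Surjective ε₂)
    (P : Subgroup (G₁ × G₂))
    (hP : ∀ p : G₁ × G₂, p ∈ P ↔ ε₁ p.1 = ε₂ p.2) :
    ∀ x₁ x₂ : G₁,
      ((⁅x₁, x₂⁆, (1 : G₂)) : G₁ × G₂) ∈ (commutator ↥P).map P.subtype :=
  stmt10_general ε₁ ε₂ hε₂ hs₂ P hP
end

section
/- Let G₁ and G₂ be groups with group homomorphisms ε₁ : G₁ → ℤ/2ℤ and ε₂ : G₂ → ℤ/2ℤ such that ε₂ is surjective, let P be the subgroup {(x, y) ∈ G₁ × G₂ : ε₁(x) = ε₂(y)} of G₁ × G₂, and let f : P → ℤ be a group homomorphism. Then the function x ↦ f(x², 1) on G₁ is additive: for all x₁, x₂ ∈ G₁, f((x₁x₂)², 1) = f(x₁², 1) + f(x₂², 1). (Note (x², 1) ∈ P for every x ∈ G₁ since ε₁(x²) = 0.) -/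
open Function
open scoped commutatorElement

def fiberProd {G₁ G₂ Q : Type*} [Group G₁] [Group G₂] [Group Q] (e₁ : G₁ →* Q)
    (e₂ : G₂ →* Q) : Subgroup (G₁ × G₂) :=
  (e₁.comp (MonoidHom.fst G₁ G₂)).eqLocus (e₂.comp (MonoidHom.snd G₁ G₂))

theorem mem_fiberProd {G₁ G₂ Q : Type*} [Group G₁] [Group G₂] [Group Q] {e₁ : G₁ →* Q}
    {e₂ : G₂ →* Q} {p : G₁ × G₂} : p ∈ fiberProd e₁ e₂ ↔ e₁ p.1 = e₂ p.2 :=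
  Iff.rfl

theorem MonoidHom.map_commutatorElement_eq_one {G M : Type*} [Group G] [CommGroup M]
    (F : G →* M) (p q : G) : F ⁅p, q⁆ = 1 := by
  simp [commutatorElement_def]

namespace Multiplicative

theorem zmod_two_sq (q : Multiplicative (ZMod 2)) : q ^ 2 = 1 := by
  revert q; decide

theorem zmod_two_eq_or_eq_one (q r : Multiplicative (ZMod 2)) : q = r ∨ q = 1 ∨ r = 1 := by
  revert q r; decide

end Multiplicative

theorem MonoidHom.exists_commute_of_zmod_two {G : Type*} [Group G]
    (e : G →* Multiplicative (ZMod 2)) (x₁ x₂ : G) :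
    ∃ a c : G, Commute a c ∧ e a = e x₁ ∧ e c = e x₂ := by
  rcases Multiplicative.zmod_two_eq_or_eq_one (e x₁) (e x₂) with h | h | h
  · exact ⟨x₁, x₁, Commute.refl x₁, rfl, h⟩
  · exact ⟨1, x₂, Commute.one_left x₂, by rw [map_one, h], rfl⟩
  · exact ⟨x₁, 1, Commute.one_right x₁, rfl, by rw [map_one, h]⟩

section

variable {G₁ G₂ M : Type*} [Group G₁] [Group G₂] [CommGroup M]
  {e₁ : G₁ →* Multiplicative (ZMod 2)} {e₂ : G₂ →* Multiplicative (ZMod 2)}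

theorem mk_one_mem_fiberProd {g : G₁} (hg : e₁ g = 1) : (g, (1 : G₂)) ∈ fiberProd e₁ e₂ := by
  rw [mem_fiberProd, hg, map_one]

theorem mk_sq_one_mem_fiberProd (x : G₁) : (x ^ 2, (1 : G₂)) ∈ fiberProd e₁ e₂ :=
  mk_one_mem_fiberProd (by rw [map_pow, Multiplicative.zmod_two_sq])

theorem mk_commutatorElement_one_mem_fiberProd (x₁ x₂ : G₁) :
    (⁅x₁, x₂⁆, (1 : G₂)) ∈ fiberProd e₁ e₂ :=
  mk_one_mem_fiberProd (e₁.map_commutatorElement_eq_one x₁ x₂)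

/-- `(⁅x₁, x₂⁆, 1)` is the quotient of the commutators of `(x₁, y₁)`, `(x₂, y₂)` and of
`(a, y₁)`, `(c, y₂)`, where `yᵢ` lift the parities of `xᵢ` and `a`, `c` are commuting elements
of the same parities. -/
theorem map_mk_commutatorElement_one (hs : Surjective e₂) (F : fiberProd e₁ e₂ →* M)
    (x₁ x₂ : G₁) : F ⟨(⁅x₁, x₂⁆, 1), mk_commutatorElement_one_mem_fiberProd x₁ x₂⟩ = 1 := by
  obtain ⟨y₁, hy₁⟩ := hs (e₁ x₁)
  obtain ⟨y₂, hy₂⟩ := hs (e₁ x₂)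
  obtain ⟨a, c, hac, ha, hc⟩ := e₁.exists_commute_of_zmod_two x₁ x₂
  let p₁ : fiberProd e₁ e₂ := ⟨(x₁, y₁), hy₁.symm⟩
  let p₂ : fiberProd e₁ e₂ := ⟨(x₂, y₂), hy₂.symm⟩
  let q₁ : fiberProd e₁ e₂ := ⟨(a, y₁), ha.trans hy₁.symm⟩
  let q₂ : fiberProd e₁ e₂ := ⟨(c, y₂), hc.trans hy₂.symm⟩
  have hsplit : (⟨(⁅x₁, x₂⁆, 1), mk_commutatorElement_one_mem_fiberProd x₁ x₂⟩ :
      fiberProd e₁ e₂) = ⁅p₁, p₂⁆ * ⁅q₁, q₂⁆⁻¹ := by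
    ext
    · simp only [p₁, p₂, q₁, q₂, Subgroup.coe_mul, Subgroup.coe_inv, Prod.fst_mul, Prod.fst_inv,
        commutatorElement_def, hac.eq]
      group
    · simp [p₁, p₂, q₁, q₂, commutatorElement_def]
  rw [hsplit, map_mul, map_inv, F.map_commutatorElement_eq_one,
    F.map_commutatorElement_eq_one, one_mul, inv_one]

def squareHom (hs : Surjective e₂) (F : fiberProd e₁ e₂ →* M) : G₁ →* M :=
  MonoidHom.mk' (fun x => F ⟨(x ^ 2, 1), mk_sq_one_mem_fiberProd x⟩) fun x₁ x₂ => by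
    have hsplit : (⟨((x₁ * x₂) ^ 2, 1), mk_sq_one_mem_fiberProd _⟩ : fiberProd e₁ e₂) =
        ⟨(x₁ ^ 2, 1), mk_sq_one_mem_fiberProd x₁⟩ *
          ⟨(⁅x₁⁻¹, x₂⁆, 1), mk_commutatorElement_one_mem_fiberProd _ _⟩ *
          ⟨(x₂ ^ 2, 1), mk_sq_one_mem_fiberProd x₂⟩ := by
      ext
      · simp only [Subgroup.coe_mul, Prod.mk_mul_mk, sq, commutatorElement_def]; group
      · simp
    rw [hsplit, map_mul, map_mul, map_mk_commutatorElement_one hs, mul_one]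

end

/-- Let `ε₁ : G₁ → ℤ/2` and `ε₂ : G₂ → ℤ/2` be group homomorphisms with `ε₂`
surjective, let `P = {(x, y) : ε₁ x = ε₂ y} ≤ G₁ × G₂`, and let `f` restrict to a
group homomorphism `P → ℤ`. Then `x ↦ f (x², 1)` is additive on `G₁`:
`f ((x₁x₂)², 1) = f (x₁², 1) + f (x₂², 1)`. (Note `(x², 1) ∈ P` since `ε₁ (x²) = 0`.) -/
theorem stmt11 {G₁ G₂ : Type*} [Group G₁] [Group G₂]
    (ε₁ : G₁ → ZMod 2) (ε₂ : G₂ → ZMod 2)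
    (hε₁ : ∀ a b : G₁, ε₁ (a * b) = ε₁ a + ε₁ b)
    (hε₂ : ∀ a b : G₂, ε₂ (a * b) = ε₂ a + ε₂ b)
    (hs₂ : Function.Surjective ε₂)
    (f : G₁ × G₂ → ℤ)
    (hf : ∀ p q : G₁ × G₂, ε₁ p.1 = ε₂ p.2 → ε₁ q.1 = ε₂ q.2 → f (p * q) = f p + f q) :
    ∀ x₁ x₂ : G₁,
      f ((x₁ * x₂) ^ 2, (1 : G₂)) = f (x₁ ^ 2, (1 : G₂)) + f (x₂ ^ 2, (1 : G₂)) := by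
  intro x₁ x₂
  let e₁ : G₁ →* Multiplicative (ZMod 2) := MonoidHom.mk' (fun a => .ofAdd (ε₁ a)) hε₁
  let e₂ : G₂ →* Multiplicative (ZMod 2) := MonoidHom.mk' (fun a => .ofAdd (ε₂ a)) hε₂
  let F : fiberProd e₁ e₂ →* Multiplicative ℤ :=
    MonoidHom.mk' (fun p => .ofAdd (f p)) fun p q => hf p q p.2 q.2
  exact congrArg Multiplicative.toAdd (map_mul (squareHom hs₂ F) x₁ x₂)
end

section
/- Let (K, α) and (L, β) be Z₂-simplicial complexes on vertex types V and W, and let G be a graph. Then there exists a graph homomorphism from the tensor product A(K, α) × A(L, β) to G if and only if there exists a Z₂-simplicial map from the product complex (K × L, α × β) to the box complex B(G). -/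
/-- The product `K × L` of simplicial complexes: simplices are the nonempty finite
subsets of `V × W` whose two projections are simplices of `K` and `L` respectively. -/
def ProdCpx {V W : Type*} [DecidableEq V] [DecidableEq W]
    (K : Set (Finset V)) (L : Set (Finset W)) : Set (Finset (V × W)) :=
  {σ | σ.Nonempty ∧ σ.image Prod.fst ∈ K ∧ σ.image Prod.snd ∈ L}

/-!
Csorba's construction `A` is left adjoint to the box complex `B`: a homomorphism
`f : A(K, α) → G` gives the Z₂-map `v ↦ (f (α v), f v)` into `B(G)`, and a Z₂-map `g` into
`B(G)` gives back the homomorphism `v ↦ (g v).2`. Moreover `A` turns the product complex into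
the tensor product, since `{(a, b), (c, d)}` is a simplex of `K × L` exactly when `{a, c} ∈ K`
and `{b, d} ∈ L`.
-/

def CsorbaAdj {V : Type*} [DecidableEq V] (K : Set (Finset V)) (α : V → V) (v w : V) : Prop :=
  ({α v, w} : Finset V) ∈ K

def IsSubsetClosed {V : Type*} (K : Set (Finset V)) : Prop :=
  ∀ σ ∈ K, ∀ τ : Finset V, τ ⊆ σ → τ.Nonempty → τ ∈ K

section Adjunction

variable {V U : Type*} [DecidableEq V] [DecidableEq U]

theorem IsSubsetClosed.pair_mem {K : Set (Finset V)} (hK : IsSubsetClosed K) {σ : Finset V}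
    (hσ : σ ∈ K) {v w : V} (hv : v ∈ σ) (hw : w ∈ σ) : ({v, w} : Finset V) ∈ K :=
  hK σ hσ _ (Finset.insert_subset hv (Finset.singleton_subset_iff.mpr hw))
    (Finset.insert_nonempty _ _)

theorem exists_hom_csorba_iff_exists_isZ2Map {K : Set (Finset V)} {α : V → V}
    (hα : Function.Involutive α) (hne : ∀ σ ∈ K, σ.Nonempty) (hK : IsSubsetClosed K)
    (E : U → U → Prop) :
    (∃ f : V → U, ∀ v w, CsorbaAdj K α v w → E (f v) (f w)) ↔
      ∃ g : V → U × U, IsZ2Map K α (BoxCpx E) Prod.swap g := by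
  constructor
  · rintro ⟨f, hf⟩
    have adj_of_mem : ∀ σ ∈ K, ∀ v ∈ σ, ∀ w ∈ σ, E (f (α v)) (f w) := fun σ hσ v hv w hw =>
      hf (α v) w (by rw [CsorbaAdj, hα v]; exact hK.pair_mem hσ hv hw)
    refine ⟨fun v => (f (α v), f v), fun σ hσ => ⟨(hne σ hσ).image _, ?_⟩, ?_⟩
    · simp only [Finset.mem_image]
      rintro _ ⟨v, hv, rfl⟩ _ ⟨w, hw, rfl⟩
      exact ⟨adj_of_mem σ hσ v hv w hw, adj_of_mem σ hσ w hw v hv⟩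
    · intro v
      simp only [hα v, Prod.swap_prod_mk]
  · rintro ⟨g, hgK, hgα⟩
    refine ⟨fun v => (g v).2, fun v w hvw => ?_⟩
    have hbox := (hgK _ hvw).2 (g (α v)) (Finset.mem_image_of_mem _ (by simp))
      (g w) (Finset.mem_image_of_mem _ (by simp))
    simpa only [hgα v, Prod.fst_swap] using hbox.1

end Adjunction

section Product

variable {V W : Type*} [DecidableEq V] [DecidableEq W]

theorem pair_mem_prodCpx_iff {K : Set (Finset V)} {L : Set (Finset W)} (p q : V × W) :
    ({p, q} : Finset (V × W)) ∈ ProdCpx K L ↔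
      ({p.1, q.1} : Finset V) ∈ K ∧ ({p.2, q.2} : Finset W) ∈ L := by
  simp only [ProdCpx, Set.mem_ofPred_eq, Finset.image_insert, Finset.image_singleton,
    Finset.insert_nonempty, true_and]

theorem csorbaAdj_prodCpx_iff {K : Set (Finset V)} {α : V → V} {L : Set (Finset W)} {β : W → W}
    (p q : V × W) :
    CsorbaAdj (ProdCpx K L) (Prod.map α β) p q ↔ CsorbaAdj K α p.1 q.1 ∧ CsorbaAdj L β p.2 q.2 :=
  pair_mem_prodCpx_iff _ _

theorem IsSubsetClosed.prodCpx {K : Set (Finset V)} {L : Set (Finset W)} (hK : IsSubsetClosed K)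
    (hL : IsSubsetClosed L) : IsSubsetClosed (ProdCpx K L) := by
  rintro σ ⟨-, hσK, hσL⟩ τ hτσ hτ
  exact ⟨hτ, hK _ hσK _ (Finset.image_subset_image hτσ) (hτ.image _),
    hL _ hσL _ (Finset.image_subset_image hτσ) (hτ.image _)⟩

end Product

theorem stmt17_general {V W U : Type*} [DecidableEq V] [DecidableEq W] [DecidableEq U]
    (K : Set (Finset V)) (α : V → V) (hK : IsZ2Complex K α)
    (L : Set (Finset W)) (β : W → W) (hL : IsZ2Complex L β)
    (E : U → U → Prop) :
    (∃ f : V × W → U, ∀ p q : V × W,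
        ({α p.1, q.1} : Finset V) ∈ K → ({β p.2, q.2} : Finset W) ∈ L →
        E (f p) (f q)) ↔
    (∃ g : V × W → U × U,
        IsZ2Map (ProdCpx K L) (Prod.map α β) (BoxCpx E) Prod.swap g) := by
  obtain ⟨⟨-, hKsub, -⟩, hα, -⟩ := hK
  obtain ⟨⟨-, hLsub, -⟩, hβ, -⟩ := hL
  rw [← exists_hom_csorba_iff_exists_isZ2Map (Function.Involutive.prodMap hα hβ)
    (fun σ hσ => hσ.1) (IsSubsetClosed.prodCpx hKsub hLsub)]
  simp only [csorbaAdj_prodCpx_iff, and_imp]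
  rfl

/-- There exists a graph homomorphism from the tensor product `A(K, α) × A(L, β)` to a
graph `G = (U, E)` if and only if there exists a Z₂-simplicial map from the product
complex `(K × L, α × β)` to the box complex `B(G)`. -/
theorem stmt17 {V W U : Type*} [DecidableEq V] [DecidableEq W] [DecidableEq U]
    (K : Set (Finset V)) (α : V → V) (hK : IsZ2Complex K α)
    (L : Set (Finset W)) (β : W → W) (hL : IsZ2Complex L β)
    (E : U → U → Prop) (hE : ∀ a b : U, E a b → E b a) :
    (∃ f : V × W → U, ∀ p q : V × W,
        ({α p.1, q.1} : Finset V) ∈ K → ({β p.2, q.2} : Finset W) ∈ L →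
        E (f p) (f q)) ↔
    (∃ g : V × W → U × U,
        IsZ2Map (ProdCpx K L) (Prod.map α β) (BoxCpx E) Prod.swap g) :=
  stmt17_general K α hK L β hL E
end
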